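/- Fix N ∈ ℕ and consider the mean-field N-DM team with expected cost J_N(γ¹,…,γ^N) = (1/N)·E[Σ_{i=1}^N c(ω₀, γ^i(v^i), (1/N)Σ_{p=1}^N γ^p(v^p))]. Assume the action set U ⊆ ℝ^n is convex, the cost c(ω₀, u, μ) is ℙ-almost surely jointly convex in (u, μ), and the observations are exchangeable conditioned on ω₀, i.e. for every permutation σ of {1,…,N} the joint law of (ω₀, v^{σ(1)},…,v^{σ(N)}) equals that of (ω₀, v¹,…,v^N). Then the team is symmetrically optimal: for every policy tuple (γ¹,…,γ^N) there exists a single policy γ̃ such that J_N(γ̃,…,γ̃) ≤ J_N(γ¹,…,γ^N). -/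

import Mathlib

open MeasureTheory Filter ENNReal

/-!
Replace the policies `γ¹, …, γᴺ` by their average `γ̄ = (1/N) Σ_j γʲ`, which is `U`-valued
since `U` is convex. The realized team cost `Σ_i c(ω₀, aᵢ, (1/N) Σ_p a_p)` is a convex and
permutation-invariant function of the action profile `a`. The profile played under `γ̄` is the
average over `k` of the profiles played under the cyclically relabelled tuples
`i ↦ γ^{i+k}`, so by Jensen its cost is at most the average of their costs. By exchangeability,
relabelling the policies by a permutation does not change the expected cost, so each of these
costs equals `J_N(γ¹, …, γᴺ)`.
-/

/-- The mean-field `N`-decision-maker expected cost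
`J_N(γ) = (1/N) E[ Σ_i c(ω₀, γ^i(v^i), (1/N) Σ_p γ^p(v^p)) ]`,
valued in `ℝ≥0∞` (the cost `c` is `[0,∞)`-valued). -/
noncomputable def meanFieldCostTuple {Ω Ω₀ : Type*} [MeasurableSpace Ω] [MeasurableSpace Ω₀]
    (P : Measure Ω) (ω₀ : Ω → Ω₀) {N m n : ℕ}
    (v : Fin N → Ω → (Fin m → ℝ))
    (c : Ω₀ → (Fin n → ℝ) → (Fin n → ℝ) → ℝ)
    (γ : Fin N → (Fin m → ℝ) → (Fin n → ℝ)) : ℝ≥0∞ :=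
  (N : ℝ≥0∞)⁻¹ *
    ∫⁻ ω, ENNReal.ofReal (∑ i : Fin N,
      c (ω₀ ω) (γ i (v i ω)) ((N : ℝ)⁻¹ • ∑ p : Fin N, γ p (v p ω))) ∂P

section ActionProfiles

variable {E : Type*} [AddCommGroup E] [Module ℝ E] {N : ℕ}

noncomputable def empiricalMean (a : Fin N → E) : E :=
  (N : ℝ)⁻¹ • ∑ p, a p

noncomputable def teamCost (c : E → E → ℝ) (a : Fin N → E) : ℝ :=
  ∑ i, c (a i) (empiricalMean a)

noncomputable def averagePolicy {X : Type*} (γ : Fin N → X → E) (x : X) : E :=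
  empiricalMean fun j => γ j x

theorem empiricalMean_comp_perm (σ : Equiv.Perm (Fin N)) (a : Fin N → E) :
    empiricalMean (a ∘ σ) = empiricalMean a := by
  simp only [empiricalMean, Function.comp_apply, Equiv.sum_comp]

theorem teamCost_comp_perm (c : E → E → ℝ) (σ : Equiv.Perm (Fin N)) (a : Fin N → E) :
    teamCost c (a ∘ σ) = teamCost c a := by
  simp only [teamCost, empiricalMean_comp_perm, Function.comp_apply,
    Equiv.sum_comp σ (fun i => c (a i) (empiricalMean a))]

theorem sum_const_inv_natCast [NeZero N] : ∑ _k : Fin N, (N : ℝ)⁻¹ = 1 := by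
  simp [Finset.card_univ, NeZero.ne]

theorem Convex.empiricalMean_mem [NeZero N] {U : Set E} (hU : Convex ℝ U) {a : Fin N → E}
    (ha : ∀ k, a k ∈ U) : empiricalMean a ∈ U := by
  simpa only [empiricalMean, Finset.smul_sum] using
    hU.sum_mem (fun _ _ => by positivity) sum_const_inv_natCast fun k _ => ha k

theorem ConvexOn.map_empiricalMean_le [NeZero N] {s : Set E} {f : E → ℝ} (hf : ConvexOn ℝ s f)
    {a : Fin N → E} (ha : ∀ k, a k ∈ s) :
    f (empiricalMean a) ≤ (N : ℝ)⁻¹ * ∑ k, f (a k) := by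
  simpa only [empiricalMean, Finset.smul_sum, Finset.mul_sum, smul_eq_mul] using
    hf.map_sum_le (fun _ _ => by positivity) sum_const_inv_natCast fun k _ => ha k

theorem ConvexOn.finset_sum {ι F : Type*} [AddCommMonoid F] [Module ℝ F] {s : Set F}
    (hs : Convex ℝ s) {t : Finset ι} {f : ι → F → ℝ} (hf : ∀ i ∈ t, ConvexOn ℝ s (f i)) :
    ConvexOn ℝ s fun x => ∑ i ∈ t, f i x := by
  classical
  induction t using Finset.induction_on with
  | empty => simpa using convexOn_const 0 hs
  | insert j t hj ih =>
    simp only [Finset.sum_insert hj]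
    exact (hf j (t.mem_insert_self j)).add (ih fun i hi => hf i (Finset.mem_insert_of_mem hi))

theorem convexOn_teamCost {c : E → E → ℝ} (hc : ConvexOn ℝ Set.univ fun p : E × E => c p.1 p.2) :
    ConvexOn ℝ Set.univ (teamCost (N := N) c) := by
  refine ConvexOn.finset_sum convex_univ fun i _ => ?_
  let L : (Fin N → E) →ₗ[ℝ] E × E :=
    (LinearMap.proj i).prod ((N : ℝ)⁻¹ • ∑ p, LinearMap.proj p)
  have hL : ⇑L = fun a => (a i, empiricalMean a) := by
    funext a
    simp [L, empiricalMean]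
  have hcomp := hc.comp_linearMap L
  rw [hL, Set.preimage_univ] at hcomp
  exact hcomp

theorem averagePolicy_comp_eq_empiricalMean_shift [NeZero N] {X : Type*} (γ : Fin N → X → E)
    (x : Fin N → X) :
    (fun i => averagePolicy γ (x i)) = empiricalMean fun k i => γ (i + k) (x i) := by
  funext i
  rw [averagePolicy, ← empiricalMean_comp_perm (Equiv.addLeft i)]
  simp [empiricalMean, Finset.sum_apply]

theorem ofReal_teamCost_averagePolicy_le [NeZero N] {X : Type*} {c : E → E → ℝ}
    (hc : ConvexOn ℝ Set.univ fun p : E × E => c p.1 p.2) (γ : Fin N → X → E) (x : Fin N → X) :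
    ENNReal.ofReal (teamCost c fun i => averagePolicy γ (x i)) ≤
      (N : ℝ≥0∞)⁻¹ * ∑ k, ENNReal.ofReal (teamCost c fun i => γ (i + k) (x i)) := by
  have hjensen := (convexOn_teamCost hc).map_empiricalMean_le
    (a := fun k i => γ (i + k) (x i)) fun _ => Set.mem_univ _
  rw [← averagePolicy_comp_eq_empiricalMean_shift] at hjensen
  calc ENNReal.ofReal (teamCost c fun i => averagePolicy γ (x i))
      ≤ ENNReal.ofReal ((N : ℝ)⁻¹ * ∑ k, teamCost c fun i => γ (i + k) (x i)) :=
        ENNReal.ofReal_le_ofReal hjensen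
    _ ≤ (N : ℝ≥0∞)⁻¹ * ∑ k, ENNReal.ofReal (teamCost c fun i => γ (i + k) (x i)) := by
        rw [ENNReal.ofReal_mul (by positivity),
          ENNReal.ofReal_inv_of_pos (Nat.cast_pos.mpr (Nat.pos_of_neZero N)),
          ENNReal.ofReal_natCast]
        gcongr
        exact Finset.le_sum_of_subadditive _ ENNReal.ofReal_zero.le
          (fun _ _ => ENNReal.ofReal_add_le) _ _

section Measurability

variable [MeasurableSpace E] [MeasurableAdd₂ E] [MeasurableConstSMul ℝ E]

theorem measurable_empiricalMean : Measurable (empiricalMean : (Fin N → E) → E) :=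
  (Finset.measurable_sum _ fun p _ => measurable_pi_apply p).const_smul _

theorem measurable_teamCost_policy {W X : Type*} [MeasurableSpace W] [MeasurableSpace X]
    {c : W → E → E → ℝ} (hc_meas : Measurable fun p : W × E × E => c p.1 p.2.1 p.2.2)
    {γ : Fin N → X → E} (hγ_meas : ∀ i, Measurable (γ i)) :
    Measurable fun q : W × (Fin N → X) => teamCost (c q.1) fun i => γ i (q.2 i) := by
  have hactions : Measurable fun q : W × (Fin N → X) => fun i => γ i (q.2 i) :=
    measurable_pi_lambda _ fun i => (hγ_meas i).comp ((measurable_pi_apply i).comp measurable_snd)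
  exact Finset.measurable_sum _ fun i _ => hc_meas.comp (measurable_fst.prodMk
    (((measurable_pi_apply i).comp hactions).prodMk (measurable_empiricalMean.comp hactions)))

end Measurability

end ActionProfiles

section MeanFieldTeam

variable {Ω Ω₀ : Type*} [MeasurableSpace Ω] [MeasurableSpace Ω₀] {P : Measure Ω} {ω₀ : Ω → Ω₀}
  {N m n : ℕ} {v : Fin N → Ω → (Fin m → ℝ)} {c : Ω₀ → (Fin n → ℝ) → (Fin n → ℝ) → ℝ}
  {γ : Fin N → (Fin m → ℝ) → (Fin n → ℝ)}

theorem meanFieldCostTuple_eq_lintegral_teamCost :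
    meanFieldCostTuple P ω₀ v c γ =
      (N : ℝ≥0∞)⁻¹ * ∫⁻ ω, ENNReal.ofReal (teamCost (c (ω₀ ω)) fun i => γ i (v i ω)) ∂P :=
  rfl

theorem meanFieldCostTuple_comp_perm (hω₀ : Measurable ω₀) (hv : ∀ i, Measurable (v i))
    (hc_meas : Measurable fun p : Ω₀ × (Fin n → ℝ) × (Fin n → ℝ) => c p.1 p.2.1 p.2.2)
    (hγ_meas : ∀ i, Measurable (γ i)) (σ : Equiv.Perm (Fin N))
    (hobs : Measure.map (fun ω => (ω₀ ω, fun i => v (σ i) ω)) P =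
      Measure.map (fun ω => (ω₀ ω, fun i => v i ω)) P) :
    meanFieldCostTuple P ω₀ v c (γ ∘ σ.symm) = meanFieldCostTuple P ω₀ v c γ := by
  have hobs_meas : ∀ τ : Equiv.Perm (Fin N), Measurable fun ω => (ω₀ ω, fun i => v (τ i) ω) :=
    fun τ => hω₀.prodMk (measurable_pi_lambda _ fun i => hv (τ i))
  have hident : ProbabilityTheory.IdentDistrib (fun ω => (ω₀ ω, fun i => v (σ i) ω))
      (fun ω => (ω₀ ω, fun i => v i ω)) P P :=
    ⟨(hobs_meas σ).aemeasurable, (hobs_meas 1).aemeasurable, hobs⟩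
  have hrelabel : ∀ ω, (teamCost (c (ω₀ ω)) fun i => (γ ∘ σ.symm) i (v i ω)) =
      teamCost (c (ω₀ ω)) fun i => γ i (v (σ i) ω) := fun ω => by
    rw [← teamCost_comp_perm _ σ]
    congr 1
    funext i
    simp
  simp only [meanFieldCostTuple_eq_lintegral_teamCost, hrelabel]
  congr 1
  exact (hident.comp (measurable_teamCost_policy hc_meas hγ_meas).ennreal_ofReal).lintegral_eq

theorem meanFieldCostTuple_averagePolicy_le [NeZero N] (hω₀ : Measurable ω₀)
    (hv : ∀ i, Measurable (v i))
    (hc_meas : Measurable fun p : Ω₀ × (Fin n → ℝ) × (Fin n → ℝ) => c p.1 p.2.1 p.2.2)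
    (hconv : ∀ᵐ ω ∂P, ConvexOn ℝ Set.univ fun p : (Fin n → ℝ) × (Fin n → ℝ) => c (ω₀ ω) p.1 p.2)
    (hγ_meas : ∀ i, Measurable (γ i)) :
    meanFieldCostTuple P ω₀ v c (fun _ => averagePolicy γ) ≤
      (N : ℝ≥0∞)⁻¹ * ∑ k, meanFieldCostTuple P ω₀ v c fun i => γ (i + k) := by
  have hcost_meas : ∀ k : Fin N, Measurable fun ω =>
      ENNReal.ofReal (teamCost (c (ω₀ ω)) fun i => γ (i + k) (v i ω)) := fun k =>
    ((measurable_teamCost_policy hc_meas fun i => hγ_meas (i + k)).comp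
      (hω₀.prodMk (measurable_pi_lambda _ hv))).ennreal_ofReal
  simp only [meanFieldCostTuple_eq_lintegral_teamCost]
  rw [← Finset.mul_sum]
  refine mul_le_mul_right ?_ _
  rw [← lintegral_finsetSum _ fun k _ => hcost_meas k,
    ← lintegral_const_mul' _ _ (by simp [NeZero.ne])]
  refine lintegral_mono_ae ?_
  filter_upwards [hconv] with ω hconvω
  exact ofReal_teamCost_averagePolicy_le hconvω γ fun i => v i ω

end MeanFieldTeam

theorem stmt6_general {Ω Ω₀ : Type*} [MeasurableSpace Ω] [MeasurableSpace Ω₀]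
    (P : Measure Ω)
    (ω₀ : Ω → Ω₀) (hω₀ : Measurable ω₀)
    (N m n : ℕ) (hN : 0 < N)
    (v : Fin N → Ω → (Fin m → ℝ)) (hv : ∀ i, Measurable (v i))
    -- the action set `U` is convex
    (U : Set (Fin n → ℝ)) (hU : Convex ℝ U)
    (c : Ω₀ → (Fin n → ℝ) → (Fin n → ℝ) → ℝ)
    (hc_meas : Measurable (fun p : Ω₀ × (Fin n → ℝ) × (Fin n → ℝ) => c p.1 p.2.1 p.2.2))
    -- `c(ω₀, u, μ)` is `ℙ`-a.s. jointly convex in `(u, μ)`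
    (hconv : ∀ᵐ ω ∂P,
      ConvexOn ℝ Set.univ (fun p : (Fin n → ℝ) × (Fin n → ℝ) => c (ω₀ ω) p.1 p.2))
    -- the observations are exchangeable conditioned on `ω₀`
    (hobs : ∀ σ : Equiv.Perm (Fin N),
      Measure.map (fun ω => (ω₀ ω, fun i => v (σ i) ω)) P =
        Measure.map (fun ω => (ω₀ ω, fun i => v i ω)) P)
    -- a given policy tuple, Borel measurable and `U`-valued
    (γ : Fin N → (Fin m → ℝ) → (Fin n → ℝ))
    (hγ_meas : ∀ i, Measurable (γ i)) (hγ_U : ∀ i x, γ i x ∈ U) :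
    -- then there is a single policy performing at least as well
    ∃ γt : (Fin m → ℝ) → (Fin n → ℝ), Measurable γt ∧ (∀ x, γt x ∈ U) ∧
      meanFieldCostTuple P ω₀ v c (fun _ => γt) ≤ meanFieldCostTuple P ω₀ v c γ := by
  have : NeZero N := ⟨hN.ne'⟩
  refine ⟨averagePolicy γ, measurable_empiricalMean.comp (measurable_pi_lambda _ hγ_meas),
    fun x => hU.empiricalMean_mem fun j => hγ_U j x, ?_⟩
  have hshift : ∀ k : Fin N, meanFieldCostTuple P ω₀ v c (fun i => γ (i + k)) =
      meanFieldCostTuple P ω₀ v c γ := fun k =>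
    meanFieldCostTuple_comp_perm hω₀ hv hc_meas hγ_meas (Equiv.addRight k).symm (hobs _)
  calc meanFieldCostTuple P ω₀ v c (fun _ => averagePolicy γ)
      ≤ (N : ℝ≥0∞)⁻¹ * ∑ k, meanFieldCostTuple P ω₀ v c fun i => γ (i + k) :=
        meanFieldCostTuple_averagePolicy_le hω₀ hv hc_meas hconv hγ_meas
    _ = meanFieldCostTuple P ω₀ v c γ := by
        simp only [hshift, Finset.sum_const, Finset.card_univ, Fintype.card_fin, nsmul_eq_mul]
        exact ENNReal.inv_mul_cancel_left (by simp [NeZero.ne]) (by simp)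

theorem stmt6 {Ω Ω₀ : Type*} [MeasurableSpace Ω] [MeasurableSpace Ω₀]
    (P : Measure Ω) [IsProbabilityMeasure P]
    (ω₀ : Ω → Ω₀) (hω₀ : Measurable ω₀)
    (N m n : ℕ) (hN : 0 < N)
    (v : Fin N → Ω → (Fin m → ℝ)) (hv : ∀ i, Measurable (v i))
    -- the action set `U` is convex
    (U : Set (Fin n → ℝ)) (hU : Convex ℝ U)
    (c : Ω₀ → (Fin n → ℝ) → (Fin n → ℝ) → ℝ)
    (hc_meas : Measurable (fun p : Ω₀ × (Fin n → ℝ) × (Fin n → ℝ) => c p.1 p.2.1 p.2.2))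
    (hc_nonneg : ∀ w u μ', 0 ≤ c w u μ')
    -- `c(ω₀, u, μ)` is `ℙ`-a.s. jointly convex in `(u, μ)`
    (hconv : ∀ᵐ ω ∂P,
      ConvexOn ℝ Set.univ (fun p : (Fin n → ℝ) × (Fin n → ℝ) => c (ω₀ ω) p.1 p.2))
    -- the observations are exchangeable conditioned on `ω₀`
    (hobs : ∀ σ : Equiv.Perm (Fin N),
      Measure.map (fun ω => (ω₀ ω, fun i => v (σ i) ω)) P =
        Measure.map (fun ω => (ω₀ ω, fun i => v i ω)) P)
    -- a given policy tuple, Borel measurable and `U`-valued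
    (γ : Fin N → (Fin m → ℝ) → (Fin n → ℝ))
    (hγ_meas : ∀ i, Measurable (γ i)) (hγ_U : ∀ i x, γ i x ∈ U) :
    -- then there is a single policy performing at least as well
    ∃ γt : (Fin m → ℝ) → (Fin n → ℝ), Measurable γt ∧ (∀ x, γt x ∈ U) ∧
      meanFieldCostTuple P ω₀ v c (fun _ => γt) ≤ meanFieldCostTuple P ω₀ v c γ :=
  stmt6_general P ω₀ hω₀ N m n hN v hv U hU c hc_meas hconv hobs γ hγ_meas hγ_U
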